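/- If an n-partite orthogonal product basis S of ℂ^{d₁}⊗...⊗ℂ^{dₙ} is A₁-reducible with respect to the partition at index k, i.e., S = {|a_i⟩⊗T_i-states} where |a_i⟩ ⊥ |a_j⟩ for all i ∈ [1,k], j ∈ [k+1,d₁], then the subset S₀ of states whose first factor lies in span{|a₁⟩,...,|a_k⟩} is an orthogonal product basis of span{|a₁⟩,...,|a_k⟩} ⊗ ℂ^{d₂} ⊗ ... ⊗ ℂ^{dₙ}; equivalently, S₀ is obtained from S by the local projection onto span{|a₁⟩,...,|a_k⟩} on the first system, and S is the disjoint union of the two OPBs S₀ and S \ S₀. -/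

import Mathlib

/-! The spans `P` and `Q` of the states indexed by `T` and by `Tᶜ` are orthogonal and together
span the whole space, so `P = Qᗮ`. Since the inner product of product states factorises, a
product state whose first factor lies in the span of the first factors over `T` is orthogonal to
every state indexed by `Tᶜ`, hence lies in `P`. -/

open scoped ComplexInnerProductSpace Matrix
noncomputable section
/-- The state space of an `n`-partite system with local dimensions `d i`,
modelling `ℂ^{d 0} ⊗ ... ⊗ ℂ^{d (n-1)}`. -/
abbrev GState {n : ℕ} (d : Fin n → ℕ) := EuclideanSpace ℂ (∀ i, Fin (d i))
/-- The product state `v 0 ⊗ v 1 ⊗ ... ⊗ v (n-1)`. -/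
def prodState {n : ℕ} (d : Fin n → ℕ) (v : ∀ i, EuclideanSpace ℂ (Fin (d i))) : GState d :=
  WithLp.toLp 2 fun x => ∏ i, v i (x i)
/-- A family of product states (given by their local factors `a j`) is reducible at
party `p` if the states split into two nonempty groups whose `p`-th factors are
mutually orthogonal. -/
def ReducibleAt {n : ℕ} {d : Fin n → ℕ} {J : Type}
    (a : J → ∀ i, EuclideanSpace ℂ (Fin (d i))) (p : Fin n) : Prop :=
  ∃ T : Set J, T.Nonempty ∧ Tᶜ.Nonempty ∧ ∀ j ∈ T, ∀ k ∈ Tᶜ, ⟪a j p, a k p⟫ = 0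

lemma inner_prodState {n : ℕ} (d : Fin n → ℕ) (v w : ∀ i, EuclideanSpace ℂ (Fin (d i))) :
    ⟪prodState d v, prodState d w⟫ = ∏ i, ⟪v i, w i⟫ := by
  classical
  simp only [prodState, PiLp.inner_apply, RCLike.inner_apply]
  rw [Fintype.prod_sum]
  congr 1
  ext x
  rw [map_prod, Finset.prod_mul_distrib]

lemma inner_prodState_eq_zero_of_inner_eq_zero {n : ℕ} {d : Fin n → ℕ}
    {v w : ∀ i, EuclideanSpace ℂ (Fin (d i))} (i : Fin n) (h : ⟪v i, w i⟫ = 0) :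
    ⟪prodState d v, prodState d w⟫ = 0 := by
  rw [inner_prodState]
  exact Finset.prod_eq_zero (Finset.mem_univ i) h

lemma Submodule.IsOrtho.orthogonal_eq_of_sup_eq_top {𝕜 E : Type*} [RCLike 𝕜]
    [NormedAddCommGroup E] [InnerProductSpace 𝕜 E] {P Q : Submodule 𝕜 E} (h : P ⟂ Q)
    (hsup : P ⊔ Q = ⊤) : Qᗮ = P := by
  calc Qᗮ = (P ⊔ Q) ⊓ Qᗮ := by rw [hsup, top_inf_eq]
    _ = P ⊔ Q ⊓ Qᗮ := sup_inf_assoc_of_le Q h.le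
    _ = P := by rw [Q.inf_orthogonal_eq_bot, sup_bot_eq]

theorem span_prodState_eq_span_prodState_cons {n : ℕ} {d : Fin (n + 1) → ℕ} {J : Type*}
    (a : J → ∀ i, EuclideanSpace ℂ (Fin (d i)))
    (horth : Pairwise fun j k => ⟪prodState d (a j), prodState d (a k)⟫ = 0)
    (hspan : Submodule.span ℂ (Set.range fun j => prodState d (a j)) = ⊤)
    (T : Set J) (hred : ∀ j ∈ T, ∀ k ∈ Tᶜ, ⟪a j 0, a k 0⟫ = 0) :
    Submodule.span ℂ {w : GState d | ∃ j ∈ T, w = prodState d (a j)} =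
      Submodule.span ℂ {w : GState d |
        ∃ u ∈ Submodule.span ℂ {x : EuclideanSpace ℂ (Fin (d 0)) | ∃ j ∈ T, x = a j 0},
          ∃ v : ∀ i : Fin n, EuclideanSpace ℂ (Fin (d i.succ)),
            w = prodState d (Fin.cons u v)} := by
  set P := Submodule.span ℂ {w : GState d | ∃ j ∈ T, w = prodState d (a j)}
  set Q := Submodule.span ℂ {w : GState d | ∃ j ∈ Tᶜ, w = prodState d (a j)}
  have hPQ : P ⟂ Q := by
    refine Submodule.isOrtho_span.mpr ?_
    rintro _ ⟨j, hj, rfl⟩ _ ⟨k, hk, rfl⟩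
    exact horth fun hjk => hk (hjk ▸ hj)
  have hsup : P ⊔ Q = ⊤ := by
    rw [← Submodule.span_union, eq_top_iff, ← hspan]
    refine Submodule.span_mono ?_
    rintro _ ⟨j, rfl⟩
    by_cases hj : j ∈ T
    exacts [Or.inl ⟨j, hj, rfl⟩, Or.inr ⟨j, hj, rfl⟩]
  have hfirst : Submodule.span ℂ {x : EuclideanSpace ℂ (Fin (d 0)) | ∃ j ∈ T, x = a j 0} ⟂
      Submodule.span ℂ {x : EuclideanSpace ℂ (Fin (d 0)) | ∃ k ∈ Tᶜ, x = a k 0} := by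
    refine Submodule.isOrtho_span.mpr ?_
    rintro _ ⟨j, hj, rfl⟩ _ ⟨k, hk, rfl⟩
    exact hred j hj k hk
  refine le_antisymm (Submodule.span_mono ?_) ?_
  · rintro _ ⟨j, hj, rfl⟩
    exact ⟨a j 0, Submodule.subset_span ⟨j, hj, rfl⟩, Fin.tail (a j), by rw [Fin.cons_self_tail]⟩
  · rw [← hPQ.orthogonal_eq_of_sup_eq_top hsup, ← Submodule.isOrtho_iff_le,
      Submodule.isOrtho_span]
    rintro _ ⟨u, hu, v, rfl⟩ _ ⟨k, hk, rfl⟩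
    exact inner_prodState_eq_zero_of_inner_eq_zero 0
      (hfirst.inner_eq hu (Submodule.subset_span ⟨k, hk, rfl⟩))

theorem reducible_OPB_splits_general
    {n : ℕ} {d : Fin (n + 1) → ℕ}
    (a : Fin (∏ i, d i) → ∀ i, EuclideanSpace ℂ (Fin (d i)))
    (horth : ∀ j k, j ≠ k → ⟪prodState d (a j), prodState d (a k)⟫ = 0)
    (hspan : Submodule.span ℂ (Set.range fun j => prodState d (a j)) = ⊤)
    (T : Set (Fin (∏ i, d i)))
    (hred : ∀ j ∈ T, ∀ k ∈ Tᶜ, ⟪a j 0, a k 0⟫ = 0) :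
    Submodule.span ℂ {w : GState d | ∃ j ∈ T, w = prodState d (a j)} =
      Submodule.span ℂ {w : GState d |
        ∃ u ∈ Submodule.span ℂ {x : EuclideanSpace ℂ (Fin (d 0)) | ∃ j ∈ T, x = a j 0},
          ∃ v : ∀ i : Fin n, EuclideanSpace ℂ (Fin (d i.succ)),
            w = prodState d (Fin.cons u v)} ∧
    Submodule.span ℂ {w : GState d | ∃ j ∈ Tᶜ, w = prodState d (a j)} =
      Submodule.span ℂ {w : GState d |
        ∃ u ∈ Submodule.span ℂ
            {x : EuclideanSpace ℂ (Fin (d 0)) | ∃ j ∈ Tᶜ, x = a j 0},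
          ∃ v : ∀ i : Fin n, EuclideanSpace ℂ (Fin (d i.succ)),
            w = prodState d (Fin.cons u v)} := by
  exact ⟨span_prodState_eq_span_prodState_cons a horth hspan T hred,
    span_prodState_eq_span_prodState_cons a horth hspan Tᶜ fun j hj k hk =>
      inner_eq_zero_symm.mp (hred k (compl_compl T ▸ hk) j hj)⟩

/-- If an OPB is `A₁`-reducible via the index split `T` (first factors
across the split are orthogonal), then the states with indices in `T` span exactly
`K ⊗ ℂ^{d₂} ⊗ ... ⊗ ℂ^{dₙ}` where `K = span{first factors over T}`, and likewise for
the complementary set; i.e. the OPB is the disjoint union of two OPBs of the two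
orthogonal subspaces, each obtained by the local projection onto `K` resp. `K^⊥`. -/
theorem reducible_OPB_splits
    {n : ℕ} {d : Fin (n + 1) → ℕ}
    (a : Fin (∏ i, d i) → ∀ i, EuclideanSpace ℂ (Fin (d i)))
    (hnz : ∀ j i, a j i ≠ 0)
    (horth : ∀ j k, j ≠ k → ⟪prodState d (a j), prodState d (a k)⟫ = 0)
    (hspan : Submodule.span ℂ (Set.range fun j => prodState d (a j)) = ⊤)
    (T : Set (Fin (∏ i, d i))) (hT : T.Nonempty) (hTc : Tᶜ.Nonempty)
    (hred : ∀ j ∈ T, ∀ k ∈ Tᶜ, ⟪a j 0, a k 0⟫ = 0) :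
    Submodule.span ℂ {w : GState d | ∃ j ∈ T, w = prodState d (a j)} =
      Submodule.span ℂ {w : GState d |
        ∃ u ∈ Submodule.span ℂ {x : EuclideanSpace ℂ (Fin (d 0)) | ∃ j ∈ T, x = a j 0},
          ∃ v : ∀ i : Fin n, EuclideanSpace ℂ (Fin (d i.succ)),
            w = prodState d (Fin.cons u v)} ∧
    Submodule.span ℂ {w : GState d | ∃ j ∈ Tᶜ, w = prodState d (a j)} =
      Submodule.span ℂ {w : GState d |
        ∃ u ∈ Submodule.span ℂ
            {x : EuclideanSpace ℂ (Fin (d 0)) | ∃ j ∈ Tᶜ, x = a j 0},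
          ∃ v : ∀ i : Fin n, EuclideanSpace ℂ (Fin (d i.succ)),
            w = prodState d (Fin.cons u v)} :=
  reducible_OPB_splits_general a horth hspan T hred
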